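/- Consider a finite directed graph with vertex subsets X̄, C̄, a distinguished vertex w_i, and a vertex set D with w_i ∉ D such that: (1) there exist |D|+1 pairwise vertex-disjoint paths from X̄ to {w_i} ∪ D, (2) there exist |D| pairwise vertex-disjoint paths from D to C̄, and (3) D is an X̄ – C̄ disconnecting set. Then b_{X̄ → {w_i} ∪ C̄} = 1 + b_{X̄ → C̄}. -/

import Mathlib

/-- A directed path from `A` to `B`: a nonempty duplicate-free list of vertices,
consecutive vertices joined by edges, starting in `A` and ending in `B`.
A single vertex counts as a path to itself. -/
def IsDiPath {V : Type*} (Adj : V → V → Prop) (A B : Set V) (l : List V) : Prop :=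
  l ≠ [] ∧ l.Chain' Adj ∧ l.Nodup ∧
    ∀ h : l ≠ [], l.head h ∈ A ∧ l.getLast h ∈ B

/-- There exist `k` pairwise vertex-disjoint directed paths from `A` to `B`. -/
def HasDisjointPaths {V : Type*} (Adj : V → V → Prop) (A B : Set V) (k : ℕ) : Prop :=
  ∃ f : Fin k → List V, (∀ i, IsDiPath Adj A B (f i)) ∧
    ∀ i j, i ≠ j → (f i).Disjoint (f j)

/-- The maximum number of pairwise vertex-disjoint directed paths from `A` to `B`. -/
noncomputable def maxDisjointPaths {V : Type*} (Adj : V → V → Prop) (A B : Set V) : ℕ :=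
  sSup {k | HasDisjointPaths Adj A B k}

/-- `D` is an `A`–`B` disconnecting set: every directed path from `A` to `B`
contains a vertex of `D`. -/
def IsDisconnecting {V : Type*} (Adj : V → V → Prop) (A B D : Set V) : Prop :=
  ∀ l, IsDiPath Adj A B l → ∃ v ∈ D, v ∈ l

/-! Re-index the first path system by its last vertices, which fill `{wᵢ} ∪ D`, and the second by
its first vertices, which fill `D`. A path of the first system then meets `D` at most in its last
vertex, a path of the second only in its first one, and two such paths can meet only in `D`:
otherwise splicing them gives an `X̄`–`C̄` walk avoiding `D`. Gluing the paths at their common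
vertices of `D` and adding the path ending at `wᵢ` yields `|D| + 1` disjoint paths from `X̄` to
`{wᵢ} ∪ C̄`, and dropping the one through `wᵢ` leaves `|D|` disjoint `X̄`–`C̄` paths. The
disconnecting sets `D` and `{wᵢ} ∪ D` show that neither count can be exceeded. -/

section

variable {V : Type*} {Adj : V → V → Prop} {A B : Set V} {l : List V} {k : ℕ}

theorem List.IsChain.exists_nodup_subset :
    ∀ {l : List V}, l.IsChain Adj → ∃ p : List V, p.IsChain Adj ∧ p.Nodup ∧
      p.head? = l.head? ∧ p.getLast? = l.getLast? ∧ p ⊆ l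
  | [], _ => ⟨[], by simp⟩
  | x :: t, hc => by
    obtain ⟨p, hpc, hpn, hph, hpl, hpt⟩ := (List.isChain_cons.1 hc).2.exists_nodup_subset
    by_cases hx : x ∈ p
    · obtain ⟨u, v, rfl⟩ := List.append_of_mem hx
      refine ⟨x :: v, hpc.right_of_append, hpn.sublist (by simp), rfl, ?_, ?_⟩
      · simp [List.getLast?_cons, ← hpl]
      · exact List.cons_subset.2
          ⟨List.mem_cons_self, fun y hy => List.mem_cons_of_mem _ (hpt (by simp [hy]))⟩
    · refine ⟨x :: p, hpc.cons ?_, List.nodup_cons.2 ⟨hx, hpn⟩, rfl, ?_,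
        List.cons_subset_cons _ hpt⟩
      · rw [hph]
        exact (List.isChain_cons.1 hc).1
      · simp [List.getLast?_cons, hpl]

theorem isDiPath_iff : IsDiPath Adj A B l ↔ l ≠ [] ∧ l.IsChain Adj ∧ l.Nodup ∧
    (∀ a ∈ l.head?, a ∈ A) ∧ ∀ b ∈ l.getLast?, b ∈ B := by
  change l ≠ [] ∧ l.IsChain Adj ∧ _ ↔ _
  cases l with
  | nil => simp
  | cons x t => simp [List.getLast?_eq_some_getLast]

namespace IsDiPath

theorem mono_right {B' : Set V} (h : IsDiPath Adj A B l) (hB : B ⊆ B') : IsDiPath Adj A B' l :=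
  ⟨h.1, h.2.1, h.2.2.1, fun hne => ⟨(h.2.2.2 hne).1, hB (h.2.2.2 hne).2⟩⟩

theorem of_singleton_union {w : V} (h : IsDiPath Adj A ({w} ∪ B) l) (hw : w ∉ l) :
    IsDiPath Adj A B l := by
  refine ⟨h.1, h.2.1, h.2.2.1, fun hne => ⟨(h.2.2.2 hne).1, ?_⟩⟩
  rcases (h.2.2.2 hne).2 with hlast | hB
  · exact absurd (hlast ▸ List.getLast_mem hne) hw
  · exact hB

theorem mem_of_right_singleton {b : V} (h : IsDiPath Adj A {b} l) : b ∈ l :=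
  (h.2.2.2 h.1).2 ▸ List.getLast_mem h.1

theorem mem_of_left_singleton {a : V} (h : IsDiPath Adj {a} B l) : a ∈ l :=
  (h.2.2.2 h.1).1 ▸ List.head_mem h.1

theorem notMem_dropLast {b : V} (h : IsDiPath Adj A {b} l) : b ∉ l.dropLast := by
  have hn := h.2.2.1
  rw [← List.dropLast_append_getLast h.1, List.nodup_append] at hn
  exact fun hb => hn.2.2 b hb b (by simpa using (h.2.2.2 h.1).2.symm) rfl

theorem notMem_tail {a : V} (h : IsDiPath Adj {a} B l) : a ∉ l.tail := by
  obtain ⟨x, t, rfl⟩ := List.exists_cons_of_ne_nil h.1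
  obtain rfl : x = a := (h.2.2.2 h.1).1
  exact (List.nodup_cons.1 h.2.2.1).1

theorem append_tail {v : V} {P Q : List V} (hP : IsDiPath Adj A {v} P)
    (hQ : IsDiPath Adj {v} B Q) (hPQ : P.Disjoint Q.tail) : IsDiPath Adj A B (P ++ Q.tail) := by
  obtain ⟨hPne, hPc, hPn, hPA, hPv⟩ := isDiPath_iff.1 hP
  obtain ⟨q, T, rfl⟩ := List.exists_cons_of_ne_nil hQ.1
  obtain ⟨-, hQc, hQn, hQv, hQB⟩ := isDiPath_iff.1 hQ
  obtain rfl : q = v := hQv q rfl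
  refine isDiPath_iff.2 ⟨by simp [hPne], hPc.append (List.isChain_cons.1 hQc).2 ?_,
    List.nodup_append.2 ⟨hPn, (List.nodup_cons.1 hQn).2, fun a ha b hb hab => hPQ ha (hab ▸ hb)⟩,
    ?_, ?_⟩
  · intro x hx y hy
    obtain rfl := hPv x hx
    exact (List.isChain_cons.1 hQc).1 y hy
  · simpa [List.head?_append, List.head?_eq_none_iff, hPne] using hPA
  · rcases List.eq_nil_or_concat' T with rfl | ⟨T', t, rfl⟩
    · have hlast : P.getLast hPne = q := hPv _ (List.getLast?_eq_some_getLast hPne)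
      simpa [List.getLast?_eq_some_getLast hPne, hlast] using hQB
    · simpa [List.getLast?_cons] using hQB

end IsDiPath

namespace IsDisconnecting

variable {D : Set V}

theorem exists_mem_of_isChain (h : IsDisconnecting Adj A B D) (hne : l ≠ [])
    (hc : l.IsChain Adj) (hA : ∀ a ∈ l.head?, a ∈ A) (hB : ∀ b ∈ l.getLast?, b ∈ B) :
    ∃ v ∈ D, v ∈ l := by
  obtain ⟨p, hpc, hpn, hph, hpl, hpsub⟩ := hc.exists_nodup_subset
  have hpne : p ≠ [] := by
    rintro rfl
    exact hne (List.head?_eq_none_iff.1 hph.symm)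
  obtain ⟨v, hvD, hvp⟩ := h p (isDiPath_iff.2 ⟨hpne, hpc, hpn, hph ▸ hA, hpl ▸ hB⟩)
  exact ⟨v, hvD, hpsub hvp⟩

theorem disjoint_tail (h : IsDisconnecting Adj A B D) {A' B' : Set V} {P Q : List V}
    (hP : IsDiPath Adj A A' P) (hQ : IsDiPath Adj B' B Q)
    (hPD : ∀ v ∈ P.dropLast, v ∉ D) (hQD : ∀ v ∈ Q.tail, v ∉ D) : P.Disjoint Q.tail := by
  intro v hvP hvQ
  obtain ⟨-, hPc, -, hPA, -⟩ := isDiPath_iff.1 hP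
  obtain ⟨q, T, rfl⟩ := List.exists_cons_of_ne_nil hQ.1
  obtain ⟨-, hQc, -, -, hQB⟩ := isDiPath_iff.1 hQ
  obtain ⟨P₁, P₂, rfl⟩ := List.append_of_mem hvP
  obtain ⟨Q₁, Q₂, rfl⟩ := List.append_of_mem hvQ
  have hc : (P₁ ++ v :: Q₂).IsChain Adj := by
    have h₁ : (P₁ ++ [v]).IsChain Adj := hPc.prefix (by simp)
    have h₂ : ([v] ++ Q₂).IsChain Adj := (List.isChain_cons.1 hQc).2.right_of_append
    simpa using h₁.append_overlap h₂ (by simp)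
  obtain ⟨u, huD, hu⟩ := h.exists_mem_of_isChain (by simp) hc
    (by simpa [List.head?_append] using hPA)
    (by simpa [List.getLast?_cons, List.getLast?_append] using hQB)
  rcases List.mem_append.1 hu with hu | hu
  · exact hPD u (by simp [List.dropLast_append_of_ne_nil, hu]) huD
  · exact hQD u (by simp_all) huD

theorem insert_singleton_union (h : IsDisconnecting Adj A B D) (w : V) :
    IsDisconnecting Adj A ({w} ∪ B) (insert w D) := by
  intro l hl
  by_cases hw : w ∈ l
  · exact ⟨w, Set.mem_insert w D, hw⟩
  · obtain ⟨v, hv, hvl⟩ := h l (hl.of_singleton_union hw)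
    exact ⟨v, Set.mem_insert_of_mem w hv, hvl⟩

end IsDisconnecting

theorem injective_of_mem_of_disjoint {f : Fin k → List V}
    (hfd : ∀ i j, i ≠ j → (f i).Disjoint (f j)) {e : Fin k → V} (he : ∀ i, e i ∈ f i) :
    Function.Injective e :=
  fun i j hij => by_contra fun hne => hfd i j hne (he i) (hij ▸ he j)

theorem IsDisconnecting.le_card {S : Finset V} (h : IsDisconnecting Adj A B ↑S)
    (hk : HasDisjointPaths Adj A B k) : k ≤ S.card := by
  obtain ⟨f, hf, hfd⟩ := hk
  choose e heS hef using fun i => h (f i) (hf i)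
  simpa using Finset.card_le_card_of_injOn e (s := Finset.univ) (fun i _ => heS i)
    (injective_of_mem_of_disjoint hfd hef).injOn

theorem maxDisjointPaths_eq_card {S : Finset V} (h : IsDisconnecting Adj A B ↑S)
    (hS : HasDisjointPaths Adj A B S.card) : maxDisjointPaths Adj A B = S.card :=
  IsGreatest.csSup_eq ⟨hS, fun _ hk => h.le_card hk⟩

theorem HasDisjointPaths.of_singleton_union {w : V}
    (h : HasDisjointPaths Adj A ({w} ∪ B) (k + 1)) : HasDisjointPaths Adj A B k := by
  obtain ⟨f, hf, hfd⟩ := h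
  obtain ⟨i₀, hi₀⟩ : ∃ i₀, ∀ i ≠ i₀, w ∉ f i := by
    by_cases hw : ∃ i, w ∈ f i
    · obtain ⟨i₀, hi₀⟩ := hw
      exact ⟨i₀, fun i hi hwi => hfd i i₀ hi hwi hi₀⟩
    · push Not at hw
      exact ⟨0, fun i _ => hw i⟩
  exact ⟨fun j => f (i₀.succAbove j),
    fun j => (hf _).of_singleton_union (hi₀ _ (Fin.succAbove_ne i₀ j)),
    fun i j hij => hfd _ _ (Fin.succAbove_right_injective.ne hij)⟩

theorem exists_reindex_of_card_le {S : Finset V} (hS : S.card ≤ k) {f : Fin k → List V}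
    (hfd : ∀ i j, i ≠ j → (f i).Disjoint (f j)) {e : Fin k → V} (he : ∀ i, e i ∈ f i)
    (heS : ∀ i, e i ∈ S) :
    ∃ p : V → List V, (∀ d ∈ S, ∃ i, p d = f i ∧ e i = d) ∧
      ∀ d ∈ S, ∀ d' ∈ S, d ≠ d' → (p d).Disjoint (p d') := by
  have hsurj := Finset.surjOn_of_injOn_of_card_le e (s := Finset.univ) (fun i _ => heS i)
    (injective_of_mem_of_disjoint hfd he).injOn (by simpa using hS)
  choose σ _ hσ using fun d (hd : d ∈ S) => hsurj hd
  classical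
  refine ⟨fun d => if hd : d ∈ S then f (σ d hd) else [],
    fun d hd => ⟨σ d hd, dif_pos hd, hσ d hd⟩, fun d hd d' hd' hne => ?_⟩
  simp only [dif_pos hd, dif_pos hd']
  exact hfd _ _ fun h => hne (by rw [← hσ d hd, ← hσ d' hd', h])

theorem HasDisjointPaths.exists_getLast_eq {S : Finset V}
    (h : HasDisjointPaths Adj A ↑S S.card) :
    ∃ p : V → List V, (∀ d ∈ S, IsDiPath Adj A {d} (p d)) ∧
      ∀ d ∈ S, ∀ d' ∈ S, d ≠ d' → (p d).Disjoint (p d') := by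
  obtain ⟨f, hf, hfd⟩ := h
  obtain ⟨p, hp, hpd⟩ := exists_reindex_of_card_le le_rfl hfd
    (e := fun i => (f i).getLast (hf i).1) (fun i => List.getLast_mem _)
    (fun i => ((hf i).2.2.2 _).2)
  refine ⟨p, fun d hd => ?_, hpd⟩
  obtain ⟨i, hpi, rfl⟩ := hp d hd
  rw [hpi]
  exact ⟨(hf i).1, (hf i).2.1, (hf i).2.2.1, fun _ => ⟨((hf i).2.2.2 _).1, rfl⟩⟩

theorem HasDisjointPaths.exists_head_eq {S : Finset V}
    (h : HasDisjointPaths Adj ↑S B S.card) :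
    ∃ q : V → List V, (∀ d ∈ S, IsDiPath Adj {d} B (q d)) ∧
      ∀ d ∈ S, ∀ d' ∈ S, d ≠ d' → (q d).Disjoint (q d') := by
  obtain ⟨f, hf, hfd⟩ := h
  obtain ⟨q, hq, hqd⟩ := exists_reindex_of_card_le le_rfl hfd
    (e := fun i => (f i).head (hf i).1) (fun i => List.head_mem _)
    (fun i => ((hf i).2.2.2 _).1)
  refine ⟨q, fun d hd => ?_, hqd⟩
  obtain ⟨i, hqi, rfl⟩ := hq d hd
  rw [hqi]
  exact ⟨(hf i).1, (hf i).2.1, (hf i).2.2.1, fun _ => ⟨rfl, ((hf i).2.2.2 _).2⟩⟩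

theorem eq_of_mem_of_disjoint {S : Finset V} {p : V → List V} (hmem : ∀ d ∈ S, d ∈ p d)
    (hpd : ∀ d ∈ S, ∀ d' ∈ S, d ≠ d' → (p d).Disjoint (p d')) {d v : V} (hd : d ∈ S)
    (hv : v ∈ S) (hvp : v ∈ p d) : v = d :=
  by_contra fun hne => hpd d hd v hv (Ne.symm hne) hvp (hmem v hv)

theorem hasDisjointPaths_of_finset {S : Finset V} {p : V → List V}
    (hp : ∀ d ∈ S, IsDiPath Adj A B (p d))
    (hpd : ∀ d ∈ S, ∀ d' ∈ S, d ≠ d' → (p d).Disjoint (p d')) :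
    HasDisjointPaths Adj A B S.card :=
  ⟨fun i => p (S.equivFin.symm i), fun i => hp _ (S.equivFin.symm i).2,
    fun i j hij => hpd _ (S.equivFin.symm i).2 _ (S.equivFin.symm j).2
      (fun h => hij (S.equivFin.symm.injective (Subtype.ext h)))⟩

theorem hasDisjointPaths_append_tail {S : Finset V} {p q : V → List V}
    (hp : ∀ d ∈ S, IsDiPath Adj A {d} (p d)) (hq : ∀ d ∈ S, IsDiPath Adj {d} B (q d))
    (hpd : ∀ d ∈ S, ∀ d' ∈ S, d ≠ d' → (p d).Disjoint (p d'))
    (hqd : ∀ d ∈ S, ∀ d' ∈ S, d ≠ d' → (q d).tail.Disjoint (q d').tail)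
    (hpq : ∀ d ∈ S, ∀ d' ∈ S, (p d).Disjoint (q d').tail) :
    HasDisjointPaths Adj A B S.card := by
  refine hasDisjointPaths_of_finset (p := fun d => p d ++ (q d).tail)
    (fun d hd => (hp d hd).append_tail (hq d hd) (hpq d hd d hd)) fun d hd d' hd' hne => ?_
  simp only [List.disjoint_append_left, List.disjoint_append_right]
  exact ⟨⟨hpd d hd d' hd' hne, (hpq d' hd' d hd).symm⟩, hpq d hd d' hd', hqd d hd d' hd' hne⟩

theorem hasDisjointPaths_singleton_union_of_isDisconnecting {w : V} {D : Finset V} (hw : w ∉ D)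
    (h1 : HasDisjointPaths Adj A ({w} ∪ ↑D) (D.card + 1))
    (h2 : HasDisjointPaths Adj ↑D B D.card) (h3 : IsDisconnecting Adj A B ↑D) :
    HasDisjointPaths Adj A ({w} ∪ B) (D.card + 1) := by
  classical
  have hcard : (insert w D).card = D.card + 1 := Finset.card_insert_of_notMem hw
  obtain ⟨p, hp, hpd⟩ := HasDisjointPaths.exists_getLast_eq (S := insert w D)
    (by rwa [hcard, Finset.coe_insert, Set.insert_eq])
  obtain ⟨q, hq, hqd⟩ := h2.exists_head_eq
  have hpD : ∀ d ∈ insert w D, ∀ v ∈ (p d).dropLast, v ∉ D := fun d hd v hv hvD =>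
    (hp d hd).notMem_dropLast <|
      eq_of_mem_of_disjoint (fun d hd => (hp d hd).mem_of_right_singleton) hpd hd
        (Finset.mem_insert_of_mem hvD) (List.mem_of_mem_dropLast hv) ▸ hv
  have hqD : ∀ d ∈ D, ∀ v ∈ (q d).tail, v ∉ D := fun d hd v hv hvD =>
    (hq d hd).notMem_tail <|
      eq_of_mem_of_disjoint (fun d hd => (hq d hd).mem_of_left_singleton) hqd hd hvD
        (List.mem_of_mem_tail hv) ▸ hv
  -- `p w` followed by the tail of the trivial path `[w]` is `p w` itself.
  let q' : V → List V := fun d => if d ∈ D then q d else [d]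
  rw [← hcard]
  refine hasDisjointPaths_append_tail (q := q') hp (fun d hd => ?_) hpd
    (fun d _ d' _ hne => ?_) (fun d hd d' _ => ?_)
  · by_cases hdD : d ∈ D
    · simp only [q', hdD, if_true]
      exact (hq d hdD).mono_right Set.subset_union_right
    · obtain rfl : d = w := by simpa [hdD] using hd
      simp [q', hdD, isDiPath_iff]
  · by_cases hdD : d ∈ D <;> by_cases hd'D : d' ∈ D <;> simp [q', hdD, hd'D]
    exact fun a ha hb => hqd d hdD d' hd'D hne (List.mem_of_mem_tail ha) (List.mem_of_mem_tail hb)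
  · by_cases hd'D : d' ∈ D
    · simpa [q', hd'D] using h3.disjoint_tail (hp d hd) (hq d' hd'D) (hpD d hd) (hqD d' hd'D)
    · simp [q', hd'D]

end

theorem maxDisjointPaths_insert_eq_succ_general
    {V : Type*} (Adj : V → V → Prop) (Xb Cb : Set V)
    (wi : V) (D : Finset V) (hwi : wi ∉ D)
    (h1 : HasDisjointPaths Adj Xb ({wi} ∪ ↑D) (D.card + 1))
    (h2 : HasDisjointPaths Adj (↑D) Cb D.card)
    (h3 : IsDisconnecting Adj Xb Cb ↑D) :
    maxDisjointPaths Adj Xb ({wi} ∪ Cb) = 1 + maxDisjointPaths Adj Xb Cb := by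
  classical
  have hlink := hasDisjointPaths_singleton_union_of_isDisconnecting hwi h1 h2 h3
  have hcard : (insert wi D).card = D.card + 1 := Finset.card_insert_of_notMem hwi
  have h3' : IsDisconnecting Adj Xb ({wi} ∪ Cb) ↑(insert wi D) := by
    simpa only [Finset.coe_insert] using h3.insert_singleton_union wi
  rw [maxDisjointPaths_eq_card h3' (hcard ▸ hlink),
    maxDisjointPaths_eq_card h3 hlink.of_singleton_union, hcard, add_comm]

/-- Composition of vertex-disjoint path systems through a disconnecting set:
if `D` (with `wᵢ ∉ D`) admits `|D| + 1` disjoint paths from `X̄` to `{wᵢ} ∪ D`,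
`|D|` disjoint paths from `D` to `C̄`, and `D` disconnects `X̄` from `C̄`, then
`b_{X̄ → {wᵢ} ∪ C̄} = 1 + b_{X̄ → C̄}`. -/
theorem maxDisjointPaths_insert_eq_succ
    {V : Type*} [Fintype V] (Adj : V → V → Prop) (Xb Cb : Set V)
    (wi : V) (D : Finset V) (hwi : wi ∉ D)
    (h1 : HasDisjointPaths Adj Xb ({wi} ∪ ↑D) (D.card + 1))
    (h2 : HasDisjointPaths Adj (↑D) Cb D.card)
    (h3 : IsDisconnecting Adj Xb Cb ↑D) :
    maxDisjointPaths Adj Xb ({wi} ∪ Cb) = 1 + maxDisjointPaths Adj Xb Cb :=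
  maxDisjointPaths_insert_eq_succ_general Adj Xb Cb wi D hwi h1 h2 h3
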